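/- Let (β,A) be a numeration system with 0 ∈ A ⊂ ℤ[β], 1 ∈ A[β], and |β| > 1. If (β,A) admits a parallel addition algorithm given by a p-local function with zero anticipation (t = 0), then β is an expanding algebraic number (all its conjugates exceed 1 in modulus). -/

import Mathlib

noncomputable section

open Pointwise

/-- `ℤ[β]`: the smallest subring of `ℂ` containing `β` (and hence `ℤ`). -/
def Zring (β : ℂ) : Subring ℂ := Subring.closure {β}

/-- `A[β]`: values of finite digit strings over `A` in nonnegative powers of `β`. -/
def Apoly (β : ℂ) (A : Set ℂ) : Set ℂ :=
  {x | ∃ (n : ℕ) (a : ℕ → ℂ), (∀ j, a j ∈ A) ∧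
    x = ∑ j ∈ Finset.range (n + 1), a j * β ^ j}

/-- A `p`-local digit set conversion in base `β` from `B` to `A`, with memory `r` and
anticipation `t` (`p = r + t + 1`), given by a local rule `Φ`. -/
def IsLocalConv (β : ℂ) (B A : Set ℂ) (r t : ℕ)
    (Φ : (Fin (r + t + 1) → ℂ) → ℂ) : Prop :=
  (∀ u : Fin (r + t + 1) → ℂ, (∀ i, u i ∈ B) → Φ u ∈ A) ∧
  ∀ w : ℤ → ℂ, (∀ j, w j ∈ B) → (Function.support w).Finite →
    (Function.support (fun j : ℤ => Φ fun i => w (j + (t : ℤ) - ((i : ℕ) : ℤ)))).Finite ∧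
    ∑ᶠ j : ℤ, w j * β ^ j =
      ∑ᶠ j : ℤ, (Φ fun i => w (j + (t : ℤ) - ((i : ℕ) : ℤ))) * β ^ j


/-!
Suppose `β` has a conjugate `γ` with `‖γ‖ ≤ 1` (when `β` is transcendental, `γ = 0` will do).
Every digit, being in `ℤ[β]`, is an integer polynomial in `β`, so substituting `γ` for `β` in a
digit string of length `L` whose value is an integer `z` again gives `z`, whence `|z| ≤ L M` for a
constant `M` depending only on `A`. Parallel addition with zero anticipation never writes below
the least significant digit, so doubling lengthens a representation by at most the memory `r`,
and `2 ^ k` has a representation of length `O(k)`. This contradicts `2 ^ k ≤ O(k)`.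
-/

open Function Set Polynomial Filter Topology

lemma finsum_int_eq_sum_range {M : Type*} [AddCommMonoid M] {f : ℤ → M} {L : ℕ}
    (hf : support f ⊆ Ico 0 (L : ℤ)) :
    ∑ᶠ j : ℤ, f j = ∑ n ∈ Finset.range L, f n := by
  rw [finsum_eq_sum_of_support_subset (s := (Finset.range L).map Nat.castEmbedding),
    Finset.sum_map]
  · rfl
  · intro j hj
    obtain ⟨hj0, hjL⟩ := hf hj
    simp only [Finset.coe_map, Finset.coe_range, mem_image, mem_Iio, Nat.castEmbedding_apply]
    exact ⟨j.toNat, by omega, by omega⟩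

/-- `x` is the value of a digit string over `A` of length `L`, indexed by `ℤ` as in
`IsLocalConv`. -/
def HasRepr (β : ℂ) (A : Set ℂ) (L : ℕ) (x : ℂ) : Prop :=
  ∃ w : ℤ → ℂ, (∀ j, w j ∈ A) ∧ support w ⊆ Ico 0 (L : ℤ) ∧ x = ∑ᶠ j : ℤ, w j * β ^ j

lemma finsum_mul_zpow_eq_sum_range {K : Type*} [DivisionRing K] {β : K} {w : ℤ → K} {L : ℕ}
    (hw : support w ⊆ Ico 0 (L : ℤ)) :
    ∑ᶠ j : ℤ, w j * β ^ j = ∑ n ∈ Finset.range L, w n * β ^ n := by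
  simp only [finsum_int_eq_sum_range ((support_mul_subset_left _ _).trans hw), zpow_natCast]

lemma exists_hasRepr_of_mem_Apoly {β x : ℂ} {A : Set ℂ} (h0 : (0 : ℂ) ∈ A)
    (hx : x ∈ Apoly β A) : ∃ L, HasRepr β A L x := by
  obtain ⟨n, a, ha, rfl⟩ := hx
  set w : ℤ → ℂ := (Ico 0 ((n + 1 : ℕ) : ℤ)).indicator fun j => a j.toNat
  have hw : support w ⊆ Ico 0 ((n + 1 : ℕ) : ℤ) := support_indicator_subset
  refine ⟨n + 1, w, fun j => ?_, hw, ?_⟩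
  · by_cases hj : j ∈ Ico 0 ((n + 1 : ℕ) : ℤ)
    · simp only [w, indicator_of_mem hj, ha]
    · simp only [w, indicator_of_notMem hj, h0]
  · rw [finsum_mul_zpow_eq_sum_range hw]
    refine Finset.sum_congr rfl fun k hk => ?_
    rw [Finset.mem_range] at hk
    simp only [w, indicator_of_mem (show (k : ℤ) ∈ Ico 0 ((n + 1 : ℕ) : ℤ) by simp; omega),
      Int.toNat_natCast]

/-- A local rule maps the zero window to zero, since the zero string must have a finitely
supported image. -/
lemma IsLocalConv.apply_zero {β : ℂ} {B A : Set ℂ} {r t : ℕ} {Φ : (Fin (r + t + 1) → ℂ) → ℂ}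
    (hΦ : IsLocalConv β B A r t Φ) (h0 : (0 : ℂ) ∈ B) : Φ (fun _ => 0) = 0 := by
  by_contra hne
  have hfin := (hΦ.2 (fun _ => 0) (fun _ => h0) (by simp)).1
  exact infinite_univ (hfin.subset fun j _ => hne)

/-- With zero anticipation the output digit at `j` only reads input digits at `j - r, …, j`, so the
sum of two strings of length `L` has length at most `L + r`. -/
lemma IsLocalConv.hasRepr_add {β : ℂ} {A : Set ℂ} {r : ℕ} {Φ : (Fin (r + 0 + 1) → ℂ) → ℂ}
    (hΦ : IsLocalConv β (A + A) A r 0 Φ) (h0 : (0 : ℂ) ∈ A) {L : ℕ} {x y : ℂ}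
    (hx : HasRepr β A L x) (hy : HasRepr β A L y) : HasRepr β A (L + r) (x + y) := by
  obtain ⟨u, hu, hsu, rfl⟩ := hx
  obtain ⟨v, hv, hsv, rfl⟩ := hy
  have hw : ∀ j, (u + v) j ∈ A + A := fun j => add_mem_add (hu j) (hv j)
  have hsw : support (u + v) ⊆ Ico 0 (L : ℤ) := (support_add u v).trans (union_subset hsu hsv)
  obtain ⟨-, hval⟩ := hΦ.2 (u + v) hw ((finite_Ico _ _).subset hsw)
  refine ⟨fun j => Φ fun i => (u + v) (j + ((0 : ℕ) : ℤ) - i), fun j => hΦ.1 _ fun i => hw _,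
    fun j hj => ?_, ?_⟩
  · by_contra hjL
    have hwindow : (fun i : Fin (r + 0 + 1) => (u + v) (j + ((0 : ℕ) : ℤ) - i)) = fun _ => 0 := by
      funext i
      refine notMem_support.1 fun hi => hjL ?_
      have := hsw hi
      simp only [mem_Ico] at this ⊢
      omega
    exact hj (by dsimp only; rw [hwindow, hΦ.apply_zero (zero_add (0 : ℂ) ▸ add_mem_add h0 h0)])
  · have hfin : ∀ w : ℤ → ℂ, support w ⊆ Ico 0 (L : ℤ) → (support fun j => w j * β ^ j).Finite :=
      fun w hw => (finite_Ico _ _).subset ((support_mul_subset_left _ _).trans hw)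
    rw [← finsum_add_distrib (hfin u hsu) (hfin v hsv), ← hval]
    simp only [Pi.add_apply, add_mul]

lemma IsLocalConv.hasRepr_two_pow {β : ℂ} {A : Set ℂ} {r : ℕ} {Φ : (Fin (r + 0 + 1) → ℂ) → ℂ}
    (hΦ : IsLocalConv β (A + A) A r 0 Φ) (h0 : (0 : ℂ) ∈ A) {L : ℕ} (h1 : HasRepr β A L 1)
    (k : ℕ) : HasRepr β A (L + k * r) (2 ^ k) := by
  induction k with
  | zero => simpa using h1
  | succ k ih =>
    rw [pow_succ, mul_two, add_one_mul, ← add_assoc]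
    exact hΦ.hasRepr_add h0 ih ih

lemma exists_aeval_eq_of_mem_Zring {β x : ℂ} (hx : x ∈ Zring β) :
    ∃ p : ℤ[X], aeval β p = x := by
  have hle : Zring β ≤ (aeval β : ℤ[X] →ₐ[ℤ] ℂ).toRingHom.range :=
    Subring.closure_le.mpr <| singleton_subset_iff.mpr ⟨X, aeval_X β⟩
  exact hle hx

/-- For transcendental `β` the minimal polynomial is `0`, and `β` satisfies no nonzero integer
relation. -/
lemma aeval_eq_zero_of_aeval_minpoly_eq_zero {β γ : ℂ} (hγ : aeval γ (minpoly ℚ β) = 0)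
    {p : ℤ[X]} (hp : aeval β p = 0) : aeval γ p = 0 := by
  rw [← aeval_map_algebraMap ℚ] at hp ⊢
  obtain ⟨q, hq⟩ := minpoly.dvd ℚ β hp
  rw [hq, map_mul, hγ, zero_mul]

lemma exists_norm_le_of_hasRepr {β γ : ℂ} {A : Set ℂ} (hAfin : A.Finite)
    (hA : A ⊆ (Zring β : Set ℂ)) (hγ : aeval γ (minpoly ℚ β) = 0) (hγ1 : ‖γ‖ ≤ 1) :
    ∃ M : ℝ, ∀ (L : ℕ) (z : ℤ), HasRepr β A L z → ‖(z : ℂ)‖ ≤ L * M := by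
  choose! P hP using fun x (hx : x ∈ A) => exists_aeval_eq_of_mem_Zring (hA hx)
  obtain ⟨M, hM⟩ := (hAfin.image fun x => ‖aeval γ (P x)‖).bddAbove
  refine ⟨M, fun L z ⟨w, hw, hsw, hz⟩ => ?_⟩
  set Q : ℤ[X] := ∑ n ∈ Finset.range L, P (w n) * X ^ n
  have hQβ : aeval β Q = z := by
    simp only [Q, hz, finsum_mul_zpow_eq_sum_range hsw, map_sum, map_mul, map_pow, aeval_X,
      hP _ (hw _)]
  have hQγ : aeval γ Q = z := by
    have h := aeval_eq_zero_of_aeval_minpoly_eq_zero hγ (p := Q - C z) (by simp [hQβ])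
    simpa [sub_eq_zero] using h
  calc ‖(z : ℂ)‖ = ‖∑ n ∈ Finset.range L, aeval γ (P (w n)) * γ ^ n‖ := by
        simp only [← hQγ, Q, map_sum, map_mul, map_pow, aeval_X]
    _ ≤ ∑ n ∈ Finset.range L, ‖aeval γ (P (w n)) * γ ^ n‖ := norm_sum_le _ _
    _ ≤ ∑ n ∈ Finset.range L, M := by
        refine Finset.sum_le_sum fun n _ => ?_
        rw [norm_mul, norm_pow]
        exact (mul_le_of_le_one_right (norm_nonneg _) (pow_le_one₀ (norm_nonneg γ) hγ1)).trans
          (hM (mem_image_of_mem _ (hw n)))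
    _ = L * M := by rw [Finset.sum_const, Finset.card_range, nsmul_eq_mul]

lemma exists_aeval_minpoly_eq_zero_norm_le_one {β : ℂ}
    (h : ¬ (IsAlgebraic ℚ β ∧ ∀ γ : ℂ, aeval γ (minpoly ℚ β) = 0 → 1 < ‖γ‖)) :
    ∃ γ : ℂ, aeval γ (minpoly ℚ β) = 0 ∧ ‖γ‖ ≤ 1 := by
  by_cases halg : IsAlgebraic ℚ β
  · simpa [halg] using h
  · refine ⟨0, ?_, by simp⟩
    rw [minpoly.eq_zero (isAlgebraic_iff_isIntegral.not.mp halg), map_zero]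

lemma not_forall_two_pow_le_linear (a b : ℝ) : ¬ ∀ k : ℕ, (2 : ℝ) ^ k ≤ a + b * k := by
  intro h
  have hlim : Tendsto (fun k : ℕ => (a + b * k) / 2 ^ k) atTop (𝓝 0) := by
    have h0 := tendsto_pow_const_div_const_pow_of_one_lt 0 one_lt_two
    have h1 := tendsto_pow_const_div_const_pow_of_one_lt 1 one_lt_two
    simpa [div_eq_mul_inv, add_mul, mul_assoc] using (h0.const_mul a).add (h1.const_mul b)
  obtain ⟨k, hk⟩ := (hlim.eventually (gt_mem_nhds one_pos)).exists
  exact hk.not_ge ((one_le_div (by positivity)).2 (h k))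

theorem stmt11_general (β : ℂ) (A : Set ℂ) (hAfin : A.Finite)
    (h0 : (0 : ℂ) ∈ A) (hA : A ⊆ (Zring β : Set ℂ))
    (h1 : (1 : ℂ) ∈ Apoly β A)
    (hpar : ∃ (r : ℕ) (Φ : (Fin (r + 0 + 1) → ℂ) → ℂ), IsLocalConv β (A + A) A r 0 Φ) :
    IsAlgebraic ℚ β ∧
      ∀ γ : ℂ, Polynomial.aeval γ (minpoly ℚ β) = 0 → 1 < ‖γ‖ := by
  obtain ⟨r, Φ, hΦ⟩ := hpar
  obtain ⟨L, hL⟩ := exists_hasRepr_of_mem_Apoly h0 h1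
  by_contra hexp
  obtain ⟨γ, hγ, hγ1⟩ := exists_aeval_minpoly_eq_zero_norm_le_one hexp
  obtain ⟨M, hM⟩ := exists_norm_le_of_hasRepr hAfin hA hγ hγ1
  refine not_forall_two_pow_le_linear (L * M) (r * M) fun k => ?_
  have hk := hM (L + k * r) (2 ^ k) (by simpa using hΦ.hasRepr_two_pow h0 hL k)
  calc (2 : ℝ) ^ k = ‖((2 ^ k : ℤ) : ℂ)‖ := by simp
    _ ≤ ((L + k * r : ℕ) : ℝ) * M := hk
    _ = L * M + r * M * k := by push_cast; ring

theorem stmt11 (β : ℂ) (hβ : 1 < ‖β‖) (A : Set ℂ) (hAfin : A.Finite)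
    (h0 : (0 : ℂ) ∈ A) (hA : A ⊆ (Zring β : Set ℂ))
    (h1 : (1 : ℂ) ∈ Apoly β A)
    (hpar : ∃ (r : ℕ) (Φ : (Fin (r + 0 + 1) → ℂ) → ℂ), IsLocalConv β (A + A) A r 0 Φ) :
    IsAlgebraic ℚ β ∧
      ∀ γ : ℂ, Polynomial.aeval γ (minpoly ℚ β) = 0 → 1 < ‖γ‖ :=
  stmt11_general β A hAfin h0 hA h1 hpar
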